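/- Let φ : R^d → [0,∞] with Young–Fenchel transform φ*, set Φ(z) := φ*(e^{z(1)}, …, e^{z(d)}) and Φ*(p) := sup_{z ∈ R^d}(⟨p,z⟩ − Φ(z)). Let ξ be a random vector such that E ∏_{j=1}^d |ξ(j)|^{p(j)} ≤ exp( Φ*(p) ) for every p ∈ [1,∞)^d. Then for every x ∈ R^d with all coordinates x(j) > 1, U(ξ, x) ≤ P( |ξ(j)| > x(j) for all j ) ≤ exp( −sup_{p ∈ [1,∞)^d} ( Σ_j p(j) log x(j) − Φ*(p) ) ). In particular, if Φ is convex and continuous and the supremum defining Φ**(log x(1),…,log x(d)) is attained at some p ∈ [1,∞)^d, then U(ξ, x) ≤ exp( −φ*(x) ). -/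

import Mathlib

open MeasureTheory Real ENNReal

/-- The multivariate tail function `U(ξ, x)`. -/
noncomputable def tailFn {Ω : Type*} [MeasurableSpace Ω] (μ : Measure Ω)
    {d : ℕ} (ξ : Ω → Fin d → ℝ) (x : Fin d → ℝ) : ℝ :=
  sSup { t | ∃ ε : Fin d → ℝ, (∀ j, ε j = 1 ∨ ε j = -1) ∧
    t = (μ {ω | ∀ j, x j < ε j * ξ ω j}).toReal }

/-- Young–Fenchel (Legendre) transform of `φ : ℝ^d → [0,∞]`. -/
noncomputable def legendreE {d : ℕ} (φ : (Fin d → ℝ) → ℝ≥0∞) (y : Fin d → ℝ) : ℝ :=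
  sSup { t | ∃ x : Fin d → ℝ, φ x ≠ ⊤ ∧ t = (∑ j, x j * y j) - (φ x).toReal }

/-- `Φ(z) := φ*(e^{z(1)},…,e^{z(d)})`. -/
noncomputable def PhiOf {d : ℕ} (φ : (Fin d → ℝ) → ℝ≥0∞) (z : Fin d → ℝ) : ℝ :=
  legendreE φ (fun j => Real.exp (z j))

/-- `Φ*(p) := sup_z (⟨p,z⟩ − Φ(z))`. -/
noncomputable def PhiStarOf {d : ℕ} (φ : (Fin d → ℝ) → ℝ≥0∞) (p : Fin d → ℝ) : ℝ :=
  ⨆ z : Fin d → ℝ, ((∑ j, p j * z j) - PhiOf φ z)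

/-!
The bound is Markov's inequality applied to `∏ⱼ |ξ(j)|^{p(j)}`, which gives
`P(∀ j, |ξ(j)| > x(j)) ≤ exp(Φ*(p) - ⟨p, log x⟩)` for each admissible `p`; optimising over `p`
gives the first claim. For the second, the maximiser `p` of `⟨p, log x⟩ - Φ*(p)` realises
`Φ**(log x)`, which by Fenchel–Moreau (separating `(log x, Φ(log x) - ε)` from the closed convex
epigraph of `Φ`) is at least `Φ(log x) = φ*(x)`.
-/

noncomputable def fenchelConj {ι : Type*} [Fintype ι] (Φ : (ι → ℝ) → ℝ) (q : ι → ℝ) : ℝ :=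
  ⨆ z, ((∑ j, q j * z j) - Φ z)

theorem ConvexOn.exists_sum_mul_add_le_of_lt {ι : Type*} [Fintype ι] {Φ : (ι → ℝ) → ℝ}
    (hconv : ConvexOn ℝ Set.univ Φ) (hΦ : LowerSemicontinuous Φ) {z₀ : ι → ℝ} {a : ℝ}
    (ha : a < Φ z₀) :
    ∃ (q : ι → ℝ) (c : ℝ), (∀ z, (∑ j, q j * z j) + c ≤ Φ z) ∧ (∑ j, q j * z₀ j) + c = a := by
  classical
  obtain ⟨l, c, hle, heq⟩ := hconv.exists_affine_le_of_lt (𝕜 := ℝ) (Set.mem_univ z₀) ha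
    isClosed_univ (hΦ.lowerSemicontinuousOn Set.univ)
  have hl (z : ι → ℝ) : l z = ∑ j, l (Pi.single j 1) * z j := by
    refine (LinearMap.pi_apply_eq_sum_univ l.toLinearMap z).trans
      (Finset.sum_congr rfl fun j _ => ?_)
    rw [smul_eq_mul, mul_comm]
    exact congrArg (l · * z j) (funext fun k => by simp [Pi.single_apply, eq_comm])
  refine ⟨fun j => l (Pi.single j 1), c, fun z => ?_, ?_⟩
  · rw [← hl]; simpa using hle ⟨z, Set.mem_univ z⟩
  · rw [← hl]; simpa using heq

/-- `fenchelConj Φ q` is a junk `0` when the supremum is infinite; only slopes `q` of affine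
minorants of `Φ`, for which it is a genuine supremum, enter the proof. -/
theorem ConvexOn.le_sub_fenchelConj_of_forall_le {ι : Type*} [Fintype ι] {Φ : (ι → ℝ) → ℝ}
    (hconv : ConvexOn ℝ Set.univ Φ) (hΦ : LowerSemicontinuous Φ) {z₀ p : ι → ℝ}
    (hmax : ∀ q, (∑ j, q j * z₀ j) - fenchelConj Φ q ≤ (∑ j, p j * z₀ j) - fenchelConj Φ p) :
    Φ z₀ ≤ (∑ j, p j * z₀ j) - fenchelConj Φ p := by
  refine le_of_forall_lt_imp_le_of_dense fun a ha => ?_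
  obtain ⟨q, c, hle, rfl⟩ := hconv.exists_sum_mul_add_le_of_lt hΦ ha
  have hconj : fenchelConj Φ q ≤ -c := ciSup_le fun z => by linarith [hle z]
  linarith [hmax q]

theorem tailFn_le_measure_abs {Ω : Type*} [MeasurableSpace Ω] (μ : Measure Ω) [IsFiniteMeasure μ]
    {d : ℕ} (ξ : Ω → Fin d → ℝ) (x : Fin d → ℝ) :
    tailFn μ ξ x ≤ (μ {ω | ∀ j, x j < |ξ ω j|}).toReal := by
  refine csSup_le ⟨_, fun _ => 1, fun _ => Or.inl rfl, rfl⟩ ?_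
  rintro _ ⟨ε, hε, rfl⟩
  refine ENNReal.toReal_mono (measure_ne_top μ _) (measure_mono fun ω hω j => ?_)
  have h := hω j
  rcases hε j with hε | hε <;> rw [hε] at h
  · exact (one_mul (ξ ω j) ▸ h).trans_le (le_abs_self _)
  · exact (neg_one_mul (ξ ω j) ▸ h).trans_le (neg_le_abs _)

theorem prod_rpow_mul_measure_le_lintegral {Ω ι : Type*} [Fintype ι] [MeasurableSpace Ω]
    (μ : Measure Ω) {ξ : Ω → ι → ℝ} (hξ : Measurable ξ) {x p : ι → ℝ} (hx : ∀ j, 0 ≤ x j)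
    (hp : ∀ j, 0 ≤ p j) :
    ENNReal.ofReal (∏ j, x j ^ p j) * μ {ω | ∀ j, x j < |ξ ω j|}
      ≤ ∫⁻ ω, ENNReal.ofReal (∏ j, |ξ ω j| ^ p j) ∂μ := by
  refine le_trans ?_ (mul_meas_ge_le_lintegral₀ (by fun_prop) (ENNReal.ofReal (∏ j, x j ^ p j)))
  refine mul_le_mul_right (measure_mono fun ω hω => ?_) _
  exact ENNReal.ofReal_le_ofReal <| Finset.prod_le_prod (fun j _ => Real.rpow_nonneg (hx j) _)
    fun j _ => Real.rpow_le_rpow (hx j) (hω j).le (hp j)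

theorem measure_abs_gt_le_exp {Ω ι : Type*} [Fintype ι] [MeasurableSpace Ω]
    (μ : Measure Ω) [IsFiniteMeasure μ] {ξ : Ω → ι → ℝ} (hξ : Measurable ξ) {x p : ι → ℝ}
    (hx : ∀ j, 0 < x j) (hp : ∀ j, 0 ≤ p j) {a : ℝ}
    (hmom : ∫⁻ ω, ENNReal.ofReal (∏ j, |ξ ω j| ^ p j) ∂μ ≤ ENNReal.ofReal (Real.exp a)) :
    (μ {ω | ∀ j, x j < |ξ ω j|}).toReal ≤ Real.exp (-((∑ j, p j * Real.log (x j)) - a)) := by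
  have hprod : ∏ j, x j ^ p j = Real.exp (∑ j, p j * Real.log (x j)) := by
    rw [Real.exp_sum]
    exact Finset.prod_congr rfl fun j _ => by rw [Real.rpow_def_of_pos (hx j), mul_comm]
  have h := ENNReal.toReal_mono (by simp)
    ((prod_rpow_mul_measure_le_lintegral μ hξ (fun j => (hx j).le) hp).trans hmom)
  rw [hprod, ENNReal.toReal_mul, ENNReal.toReal_ofReal (by positivity),
    ENNReal.toReal_ofReal (by positivity)] at h
  rw [neg_sub, Real.exp_sub, le_div_iff₀ (by positivity), mul_comm]
  exact h

theorem le_exp_neg_sSup {S : Set ℝ} (hS : S.Nonempty) {M : ℝ} (hM : ∀ t ∈ S, M ≤ Real.exp (-t)) :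
    M ≤ Real.exp (-sSup S) := by
  rcases le_or_gt M 0 with hM0 | hM0
  · exact hM0.trans (Real.exp_pos _).le
  have hbdd : sSup S ≤ -Real.log M := csSup_le hS fun t ht => by
    have := Real.log_le_log hM0 (hM t ht)
    rw [Real.log_exp] at this
    linarith
  calc M = Real.exp (Real.log M) := (Real.exp_log hM0).symm
    _ ≤ Real.exp (-sSup S) := Real.exp_le_exp.2 (by linarith)

theorem stmt13_general {d : ℕ} (φ : (Fin d → ℝ) → ℝ≥0∞)
    {Ω : Type*} [MeasurableSpace Ω] (μ : Measure Ω) [IsProbabilityMeasure μ]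
    (ξ : Ω → Fin d → ℝ) (hmeas : Measurable ξ)
    (hmom : ∀ p : Fin d → ℝ, (∀ j, 1 ≤ p j) →
      ∫⁻ ω, ENNReal.ofReal (∏ j, |ξ ω j| ^ p j) ∂μ
        ≤ ENNReal.ofReal (Real.exp (PhiStarOf φ p))) :
    (∀ x : Fin d → ℝ, (∀ j, 1 < x j) →
      tailFn μ ξ x ≤ (μ {ω | ∀ j, x j < |ξ ω j|}).toReal ∧
      (μ {ω | ∀ j, x j < |ξ ω j|}).toReal
        ≤ Real.exp (-(sSup { t | ∃ p : Fin d → ℝ, (∀ j, 1 ≤ p j) ∧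
            t = (∑ j, p j * Real.log (x j)) - PhiStarOf φ p }))) ∧
    (ConvexOn ℝ Set.univ (PhiOf φ) → Continuous (PhiOf φ) →
      ∀ x : Fin d → ℝ, (∀ j, 1 < x j) →
        (∃ p : Fin d → ℝ, (∀ j, 1 ≤ p j) ∧ ∀ q : Fin d → ℝ,
            (∑ j, q j * Real.log (x j)) - PhiStarOf φ q
              ≤ (∑ j, p j * Real.log (x j)) - PhiStarOf φ p) →
        tailFn μ ξ x ≤ Real.exp (-(legendreE φ x))) := by
  have hchernoff (x : Fin d → ℝ) (hx : ∀ j, 1 < x j) (p : Fin d → ℝ) (hp : ∀ j, 1 ≤ p j) :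
      (μ {ω | ∀ j, x j < |ξ ω j|}).toReal
        ≤ Real.exp (-((∑ j, p j * Real.log (x j)) - PhiStarOf φ p)) :=
    measure_abs_gt_le_exp μ hmeas (fun j => one_pos.trans (hx j))
      (fun j => zero_le_one.trans (hp j)) (hmom p hp)
  refine ⟨fun x hx => ⟨tailFn_le_measure_abs μ ξ x, le_exp_neg_sSup ?_ ?_⟩, ?_⟩
  · exact ⟨_, 1, fun _ => le_rfl, rfl⟩
  · rintro _ ⟨p, hp, rfl⟩
    exact hchernoff x hx p hp
  · rintro hconv hcont x hx ⟨p, hp, hmax⟩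
    have hΦ : PhiOf φ (fun j => Real.log (x j)) = legendreE φ x := by
      simp only [PhiOf, Real.exp_log (one_pos.trans (hx _))]
    have hbiconj : legendreE φ x ≤ (∑ j, p j * Real.log (x j)) - PhiStarOf φ p :=
      hΦ ▸ hconv.le_sub_fenchelConj_of_forall_le hcont.lowerSemicontinuous hmax
    calc tailFn μ ξ x ≤ _ := tailFn_le_measure_abs μ ξ x
      _ ≤ _ := hchernoff x hx p hp
      _ ≤ Real.exp (-(legendreE φ x)) := Real.exp_le_exp.2 (neg_le_neg hbiconj)

/-- From mixed moments to tails: if `E ∏_j |ξ(j)|^{p(j)} ≤ exp(Φ*(p))` for all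
`p ∈ [1,∞)^d`, then for every `x` with all coordinates `> 1`,
`U(ξ,x) ≤ P(∀ j, |ξ(j)| > x(j)) ≤ exp(−sup_{p ∈ [1,∞)^d}(Σ_j p(j) log x(j) − Φ*(p)))`;
and if moreover `Φ` is convex and continuous and the supremum defining
`Φ**(log x)` is attained at some `p ∈ [1,∞)^d`, then `U(ξ,x) ≤ exp(−φ*(x))`. -/
theorem stmt13 {d : ℕ} (φ : (Fin d → ℝ) → ℝ≥0∞) (hfin : ∃ x, φ x ≠ ⊤)
    {Ω : Type*} [MeasurableSpace Ω] (μ : Measure Ω) [IsProbabilityMeasure μ]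
    (ξ : Ω → Fin d → ℝ) (hmeas : Measurable ξ)
    (hmom : ∀ p : Fin d → ℝ, (∀ j, 1 ≤ p j) →
      ∫⁻ ω, ENNReal.ofReal (∏ j, |ξ ω j| ^ p j) ∂μ
        ≤ ENNReal.ofReal (Real.exp (PhiStarOf φ p))) :
    (∀ x : Fin d → ℝ, (∀ j, 1 < x j) →
      tailFn μ ξ x ≤ (μ {ω | ∀ j, x j < |ξ ω j|}).toReal ∧
      (μ {ω | ∀ j, x j < |ξ ω j|}).toReal
        ≤ Real.exp (-(sSup { t | ∃ p : Fin d → ℝ, (∀ j, 1 ≤ p j) ∧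
            t = (∑ j, p j * Real.log (x j)) - PhiStarOf φ p }))) ∧
    (ConvexOn ℝ Set.univ (PhiOf φ) → Continuous (PhiOf φ) →
      ∀ x : Fin d → ℝ, (∀ j, 1 < x j) →
        (∃ p : Fin d → ℝ, (∀ j, 1 ≤ p j) ∧ ∀ q : Fin d → ℝ,
            (∑ j, q j * Real.log (x j)) - PhiStarOf φ q
              ≤ (∑ j, p j * Real.log (x j)) - PhiStarOf φ p) →
        tailFn μ ξ x ≤ Real.exp (-(legendreE φ x))) :=
  stmt13_general φ μ ξ hmeas hmom
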